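/- Let q ≡ 1 (mod 4) be a prime power with q not a power of 5, i ∈ F_q with i² = -1. In PSL(2,q) acting on P = (F_q²\{0})/⟨i⟩, the setwise stabilizer of the unordered pair e = {[(1,0)], [(0,1)]} is the group generated by (classes of) [[0,-1],[1,0]] and [[0,i],[i,0]], which has order 4. -/

import Mathlib

open Matrix MulAction Pointwise

abbrev SL2 (F : Type) [Field F] := Matrix.SpecialLinearGroup (Fin 2) F

abbrev PSL2 (F : Type) [Field F] := SL2 F ⧸ Subgroup.center (SL2 F)

/-- Nonzero vectors of `F²`. -/
def Vec (F : Type) [Field F] := {v : Fin 2 → F // v ≠ 0}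

/-- Two nonzero vectors are related if they differ by multiplication by a power of `i`. -/
def vrel (F : Type) [Field F] (i : F) (v w : Vec F) : Prop :=
  ∃ n : ℕ, (w.1 : Fin 2 → F) = i ^ n • v.1

/-- The point set `P = (F² \ {0})/⟨i⟩`. -/
def Pts (F : Type) [Field F] (i : F) := Quot (vrel F i)

/-- The class of a nonzero vector in `P`. -/
def mkPt (F : Type) [Field F] (i : F) (v : Fin 2 → F) (hv : v ≠ 0) : Pts F i :=
  Quot.mk _ ⟨v, hv⟩

lemma vec_fst_ne_zero {F : Type} [Field F] (b : F) : ![(1 : F), b] ≠ 0 := by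
  intro h
  simpa using congrFun h 0

lemma vec_snd_ne_zero {F : Type} [Field F] (a : F) : ![a, (1 : F)] ≠ 0 := by
  intro h
  simpa using congrFun h 1

/-- `SL(2,q)` acts on nonzero vectors. -/
def slVecSMul {F : Type} [Field F] (A : SL2 F) (v : Vec F) : Vec F :=
  ⟨(A : Matrix (Fin 2) (Fin 2) F) *ᵥ v.1, by
    intro h
    apply v.2
    have h2 : ((A⁻¹ : SL2 F) : Matrix (Fin 2) (Fin 2) F) *ᵥ
        ((A : Matrix (Fin 2) (Fin 2) F) *ᵥ v.1) = 0 := by rw [h, Matrix.mulVec_zero]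
    rwa [Matrix.mulVec_mulVec, ← Matrix.SpecialLinearGroup.coe_mul, inv_mul_cancel,
      Matrix.SpecialLinearGroup.coe_one, Matrix.one_mulVec] at h2⟩

instance (F : Type) [Field F] (i : F) : SMul (SL2 F) (Pts F i) :=
  ⟨fun A => Quot.map (slVecSMul A) (by
    rintro v w ⟨n, hn⟩
    exact ⟨n, by simp [slVecSMul, hn, Matrix.mulVec_smul]⟩)⟩

instance (F : Type) [Field F] (i : F) : MulAction (SL2 F) (Pts F i) where
  one_smul p := by
    induction p using Quot.ind with | _ v => ?_
    show Quot.mk _ (slVecSMul 1 v) = Quot.mk _ v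
    congr 1
    apply Subtype.ext
    show ((1 : SL2 F) : Matrix (Fin 2) (Fin 2) F) *ᵥ v.1 = v.1
    rw [Matrix.SpecialLinearGroup.coe_one, Matrix.one_mulVec]
  mul_smul A B p := by
    induction p using Quot.ind with | _ v => ?_
    show Quot.mk _ (slVecSMul (A * B) v) = Quot.mk _ (slVecSMul A (slVecSMul B v))
    congr 1
    apply Subtype.ext
    show ((A * B : SL2 F) : Matrix (Fin 2) (Fin 2) F) *ᵥ v.1 =
      (A : Matrix (Fin 2) (Fin 2) F) *ᵥ ((B : Matrix (Fin 2) (Fin 2) F) *ᵥ v.1)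
    rw [Matrix.SpecialLinearGroup.coe_mul, Matrix.mulVec_mulVec]

/-- The stabilizer in `PSL(2,q)` of a point of `P`, i.e. the image in the quotient
`PSL(2,q) = SL(2,q)/center` of the stabilizer in `SL(2,q)`. -/
def pslPtStab (F : Type) [Field F] (i : F) (p : Pts F i) : Subgroup (PSL2 F) :=
  (MulAction.stabilizer (SL2 F) p).map (QuotientGroup.mk' (Subgroup.center (SL2 F)))

/-- The setwise stabilizer in `PSL(2,q)` of a set of points of `P`. -/
def pslSetStab (F : Type) [Field F] (i : F) (s : Set (Pts F i)) : Subgroup (PSL2 F) :=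
  (MulAction.stabilizer (SL2 F) s).map (QuotientGroup.mk' (Subgroup.center (SL2 F)))

/-! An element of `SL(2,q)` permuting `{[(1,0)], [(0,1)]}` has columns that are powers of `i`
times basis vectors, so it is diagonal or antidiagonal. Multiplying by `a = [[0,-1],[1,0]]` turns
the antidiagonal case into the diagonal one, and `det = 1` makes a diagonal element a power of
`ab = diag(-i, i)` (with `b = [[0,i],[i,0]]`). Hence the stabilizer in `SL(2,q)` is `⟨a, b⟩` and
its image in `PSL(2,q)` is generated by the classes of `a` and `b`. As `a²`, `b²` and `(ab)²` all
equal `-1`, these classes are commuting involutions; they and their product are nontrivial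
because `a`, `b` and `ab` are not scalar (for `ab` this needs `q` odd), so the image is a Klein
four-group. -/

section KleinFour

variable {G : Type*} [Group G] {x y : G}

lemma Subgroup.coe_closure_pair_of_sq_eq_one (hx : x ^ 2 = 1) (hy : y ^ 2 = 1)
    (hxy : (x * y) ^ 2 = 1) :
    (Subgroup.closure {x, y} : Set G) = {1, x, y, x * y} := by
  rw [sq] at hx hy hxy
  have hxx (g : G) : x * (x * g) = g := by rw [← mul_assoc, hx, one_mul]
  have hyx : y * x = x * y := by
    rw [← inv_eq_of_mul_eq_one_right hxy, _root_.mul_inv_rev, inv_eq_of_mul_eq_one_right hx,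
      inv_eq_of_mul_eq_one_right hy]
  have hyx' (g : G) : y * (x * g) = x * (y * g) := by rw [← mul_assoc, hyx, mul_assoc]
  apply subset_antisymm
  · intro g hg
    induction hg using Subgroup.closure_induction with
    | mem g hg => rcases hg with rfl | rfl <;> simp
    | one => simp
    | mul g h _ _ hg hh =>
      rcases hg with rfl | rfl | rfl | rfl <;> rcases hh with rfl | rfl | rfl | rfl <;>
        simp [mul_assoc, hx, hy, hxx, hyx, hyx']
    | inv g _ hg =>
      rcases hg with rfl | rfl | rfl | rfl <;>
        simp [inv_eq_of_mul_eq_one_right hx, inv_eq_of_mul_eq_one_right hy, hyx]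
  · rintro g (rfl | rfl | rfl | rfl)
    · exact one_mem _
    · exact Subgroup.subset_closure (by simp)
    · exact Subgroup.subset_closure (by simp)
    · exact mul_mem (Subgroup.subset_closure (by simp)) (Subgroup.subset_closure (by simp))

lemma Subgroup.card_closure_pair_of_sq_eq_one (hx : x ^ 2 = 1) (hy : y ^ 2 = 1)
    (hxy : (x * y) ^ 2 = 1) (hx1 : x ≠ 1) (hy1 : y ≠ 1) (hxy1 : x * y ≠ 1) :
    Nat.card (Subgroup.closure {x, y}) = 4 := by
  rw [← SetLike.coe_sort_coe, Nat.card_coe_set_eq, coe_closure_pair_of_sq_eq_one hx hy hxy,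
    Set.ncard_eq_four]
  refine ⟨1, x, y, x * y, hx1.symm, hy1.symm, hxy1.symm, fun h => hxy1 ?_, ?_, ?_, rfl⟩
  · rw [← h, ← sq, hx]
  · simpa [eq_comm] using hy1
  · simpa [eq_comm] using hx1

end KleinFour

lemma FiniteField.two_ne_zero_of_odd_card {F : Type} [Field F] [Fintype F]
    (h : Odd (Fintype.card F)) : (2 : F) ≠ 0 :=
  Ring.two_ne_zero fun h2 => Nat.not_even_iff_odd.mpr h
    (Nat.even_iff.mpr (FiniteField.even_card_of_char_two h2))

lemma Matrix.mulVec_vec_one_zero {F : Type} [Field F] (M : Matrix (Fin 2) (Fin 2) F) :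
    M *ᵥ ![1, 0] = ![M 0 0, M 1 0] := by
  ext j; fin_cases j <;> simp [Matrix.mulVec, dotProduct, Fin.sum_univ_two]

lemma Matrix.mulVec_vec_zero_one {F : Type} [Field F] (M : Matrix (Fin 2) (Fin 2) F) :
    M *ᵥ ![0, 1] = ![M 0 1, M 1 1] := by
  ext j; fin_cases j <;> simp [Matrix.mulVec, dotProduct, Fin.sum_univ_two]

section PSL2

variable {F : Type} [Field F]

lemma SL2.mk_sq_eq_one_of_sq_eq_neg_one {A : SL2 F} (h : A ^ 2 = -1) :
    (A : PSL2 F) ^ 2 = 1 := by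
  rw [← QuotientGroup.mk_pow, h, QuotientGroup.eq_one_iff,
    Matrix.SpecialLinearGroup.mem_center_iff]
  exact ⟨-1, by norm_num, by ext j k; fin_cases j <;> fin_cases k <;> simp⟩

lemma SL2.mk_ne_one_of_not_scalar {A : SL2 F} (h : A 0 1 ≠ 0 ∨ A 0 0 ≠ A 1 1) :
    (A : PSL2 F) ≠ 1 := by
  rw [Ne, QuotientGroup.eq_one_iff, Matrix.SpecialLinearGroup.mem_center_iff]
  rintro ⟨r, -, hr⟩
  simp [← hr] at h

end PSL2

section Points

variable {F : Type} [Field F] {i : F}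

lemma vrel_equivalence (hi : i ^ 2 = -1) : Equivalence (vrel F i) where
  refl _ := ⟨0, by simp⟩
  symm := by
    rintro v w ⟨n, hn⟩
    have hi4 : i ^ 4 = 1 := by linear_combination (i ^ 2 - 1) * hi
    refine ⟨3 * n, ?_⟩
    rw [hn, smul_smul, ← pow_add, show 3 * n + n = 4 * n by ring, pow_mul, hi4, one_pow,
      one_smul]
  trans := by
    rintro u v w ⟨n, hn⟩ ⟨m, hm⟩
    exact ⟨m + n, by rw [hm, hn, smul_smul, pow_add]⟩

lemma mkPt_eq_mkPt_iff (hi : i ^ 2 = -1) {v w : Fin 2 → F} {hv : v ≠ 0} {hw : w ≠ 0} :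
    mkPt F i v hv = mkPt F i w hw ↔ ∃ n : ℕ, w = i ^ n • v :=
  ⟨fun h => (vrel_equivalence hi).eqvGen_iff.mp (Quot.eqvGen_exact h), fun h => Quot.sound h⟩

lemma smul_mkPt_eq_mkPt_iff (hi : i ^ 2 = -1) (A : SL2 F) {v w : Fin 2 → F} {hv : v ≠ 0}
    {hw : w ≠ 0} :
    A • mkPt F i v hv = mkPt F i w hw ↔
      ∃ n : ℕ, (A : Matrix (Fin 2) (Fin 2) F) *ᵥ v = i ^ n • w := by
  rw [eq_comm]
  exact mkPt_eq_mkPt_iff hi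

abbrev pt10 (F : Type) [Field F] (i : F) : Pts F i := mkPt F i ![1, 0] (vec_fst_ne_zero 0)

abbrev pt01 (F : Type) [Field F] (i : F) : Pts F i := mkPt F i ![0, 1] (vec_snd_ne_zero 0)

def quarterTurn (F : Type) [Field F] : SL2 F :=
  ⟨!![0, -1; 1, 0], by norm_num [Matrix.det_fin_two_of]⟩

def antidiag (i : F) (hi : i ^ 2 = -1) : SL2 F :=
  ⟨!![0, i; i, 0], by rw [Matrix.det_fin_two_of]; linear_combination -hi⟩

@[simp]
lemma coe_quarterTurn : (quarterTurn F : Matrix (Fin 2) (Fin 2) F) = !![0, -1; 1, 0] := rfl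

@[simp]
lemma coe_antidiag (hi : i ^ 2 = -1) :
    (antidiag i hi : Matrix (Fin 2) (Fin 2) F) = !![0, i; i, 0] := rfl

lemma coe_quarterTurn_mul_antidiag (hi : i ^ 2 = -1) :
    ((quarterTurn F * antidiag i hi : SL2 F) : Matrix (Fin 2) (Fin 2) F) =
      Matrix.diagonal ![-i, i] := by
  ext j k
  fin_cases j <;> fin_cases k <;> simp [Matrix.mul_apply]

lemma quarterTurn_sq : quarterTurn F ^ 2 = -1 := by
  ext j k
  fin_cases j <;> fin_cases k <;> simp [sq, Matrix.mul_apply]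

lemma antidiag_sq (hi : i ^ 2 = -1) : antidiag i hi ^ 2 = -1 := by
  ext j k
  fin_cases j <;> fin_cases k <;> simp [sq, Matrix.mul_apply, ← hi]

lemma quarterTurn_mul_antidiag_sq (hi : i ^ 2 = -1) :
    (quarterTurn F * antidiag i hi) ^ 2 = -1 := by
  ext j k
  rw [Matrix.SpecialLinearGroup.coe_pow, coe_quarterTurn_mul_antidiag, Matrix.diagonal_pow]
  fin_cases j <;> fin_cases k <;> simp [hi]

lemma quarterTurn_smul_pt10 (hi : i ^ 2 = -1) : quarterTurn F • pt10 F i = pt01 F i :=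
  (smul_mkPt_eq_mkPt_iff hi _).mpr ⟨0, by rw [Matrix.mulVec_vec_one_zero]; simp⟩

lemma quarterTurn_smul_pt01 (hi : i ^ 2 = -1) : quarterTurn F • pt01 F i = pt10 F i :=
  (smul_mkPt_eq_mkPt_iff hi _).mpr ⟨2, by rw [Matrix.mulVec_vec_zero_one]; simp [hi]⟩

lemma antidiag_smul_pt10 (hi : i ^ 2 = -1) : antidiag i hi • pt10 F i = pt01 F i :=
  (smul_mkPt_eq_mkPt_iff hi _).mpr ⟨1, by rw [Matrix.mulVec_vec_one_zero]; simp⟩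

lemma antidiag_smul_pt01 (hi : i ^ 2 = -1) : antidiag i hi • pt01 F i = pt10 F i :=
  (smul_mkPt_eq_mkPt_iff hi _).mpr ⟨1, by rw [Matrix.mulVec_vec_zero_one]; simp⟩

lemma exists_eq_pow_of_fixes_pt10_pt01 (hi : i ^ 2 = -1) {A : SL2 F}
    (h10 : A • pt10 F i = pt10 F i) (h01 : A • pt01 F i = pt01 F i) :
    ∃ n : ℕ, A = (quarterTurn F * antidiag i hi) ^ n := by
  obtain ⟨n, hn⟩ := (smul_mkPt_eq_mkPt_iff hi A).mp h10
  obtain ⟨m, hm⟩ := (smul_mkPt_eq_mkPt_iff hi A).mp h01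
  rw [Matrix.mulVec_vec_one_zero] at hn
  rw [Matrix.mulVec_vec_zero_one] at hm
  have h00 : A 0 0 = i ^ n := by simpa using congrFun hn 0
  have h10 : A 1 0 = 0 := by simpa using congrFun hn 1
  have h01 : A 0 1 = 0 := by simpa using congrFun hm 0
  have h11 : A 1 1 = i ^ m := by simpa using congrFun hm 1
  have hdet : i ^ n * i ^ m = 1 := by
    have h := A.det_coe
    rw [Matrix.det_fin_two] at h
    rw [← h00, ← h11]
    simpa [h10, h01] using h
  have hpow : (-i) ^ m = i ^ n := by
    calc (-i) ^ m = (-i) ^ m * (i ^ n * i ^ m) := by rw [hdet, mul_one]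
      _ = i ^ n * (-i * i) ^ m := by ring
      _ = i ^ n := by rw [show -i * i = 1 by linear_combination -hi, one_pow, mul_one]
  refine ⟨m, ?_⟩
  ext j k
  rw [Matrix.SpecialLinearGroup.coe_pow, coe_quarterTurn_mul_antidiag, Matrix.diagonal_pow]
  fin_cases j <;> fin_cases k <;> simp [h00, h10, h01, h11, hpow]

lemma stabilizer_pair_eq_closure (hi : i ^ 2 = -1) :
    stabilizer (SL2 F) ({pt10 F i, pt01 F i} : Set (Pts F i)) =
      Subgroup.closure {quarterTurn F, antidiag i hi} := by
  have hturn : quarterTurn F ∈ Subgroup.closure {quarterTurn F, antidiag i hi} :=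
    Subgroup.subset_closure (by simp)
  have hD (n : ℕ) :
      (quarterTurn F * antidiag i hi) ^ n ∈ Subgroup.closure {quarterTurn F, antidiag i hi} :=
    pow_mem (mul_mem hturn (Subgroup.subset_closure (by simp))) n
  apply le_antisymm
  · intro A hA
    rw [mem_stabilizer_iff, Set.smul_set_insert, Set.smul_set_singleton] at hA
    rcases Set.pair_eq_pair_iff.mp hA with ⟨h10, h01⟩ | ⟨h10, h01⟩
    · obtain ⟨n, rfl⟩ := exists_eq_pow_of_fixes_pt10_pt01 hi h10 h01
      exact hD n
    · obtain ⟨n, hn⟩ := exists_eq_pow_of_fixes_pt10_pt01 (A := quarterTurn F * A) hi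
        (by rw [mul_smul, h10, quarterTurn_smul_pt01 hi])
        (by rw [mul_smul, h01, quarterTurn_smul_pt10 hi])
      rw [eq_inv_mul_of_mul_eq hn]
      exact mul_mem (inv_mem hturn) (hD n)
  · rw [Subgroup.closure_le]
    rintro A (rfl | rfl) <;> rw [SetLike.mem_coe, mem_stabilizer_iff, Set.smul_set_insert,
      Set.smul_set_singleton, Set.pair_comm]
    · rw [quarterTurn_smul_pt10 hi, quarterTurn_smul_pt01 hi]
    · rw [antidiag_smul_pt10 hi, antidiag_smul_pt01 hi]

end Points

/-- For `q` not a power of 5, the setwise stabilizer in `PSL(2,q)` of the pair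
`{[(1,0)],[(0,1)]}` is generated by the classes of `[[0,-1],[1,0]]` and `[[0,i],[i,0]]`,
and has order 4. -/
theorem stmt_5 (q : ℕ) (F : Type) [Field F] [Fintype F]
    (hcard : Fintype.card F = q) (hq : q % 4 = 1)
    (i : F) (hi : i ^ 2 = -1) :
    pslSetStab F i
        {mkPt F i ![1, 0] (vec_fst_ne_zero 0), mkPt F i ![0, 1] (vec_snd_ne_zero 0)} =
      Subgroup.closure
        {(QuotientGroup.mk (⟨!![0, -1; 1, 0], by norm_num [Matrix.det_fin_two_of]⟩ : SL2 F) :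
            PSL2 F),
          (QuotientGroup.mk
            (⟨!![0, i; i, 0], by
              rw [Matrix.det_fin_two_of, show i * i = i ^ 2 by ring, hi]; ring⟩ : SL2 F) :
            PSL2 F)} ∧
    Nat.card (pslSetStab F i
      {mkPt F i ![1, 0] (vec_fst_ne_zero 0), mkPt F i ![0, 1] (vec_snd_ne_zero 0)}) = 4 := by
  have h2 : (2 : F) ≠ 0 :=
    FiniteField.two_ne_zero_of_odd_card (by rw [hcard, Nat.odd_iff]; omega)
  have hi0 : i ≠ 0 := ne_zero_pow two_ne_zero (by rw [hi]; exact neg_ne_zero.mpr one_ne_zero)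
  have hstab : pslSetStab F i {pt10 F i, pt01 F i} =
      Subgroup.closure {(quarterTurn F : PSL2 F), (antidiag i hi : PSL2 F)} := by
    rw [pslSetStab, stabilizer_pair_eq_closure hi, MonoidHom.map_closure, Set.image_pair]
    rfl
  refine ⟨hstab, ?_⟩
  rw [hstab]
  apply Subgroup.card_closure_pair_of_sq_eq_one (SL2.mk_sq_eq_one_of_sq_eq_neg_one quarterTurn_sq)
    (SL2.mk_sq_eq_one_of_sq_eq_neg_one (antidiag_sq hi))
  · rw [← QuotientGroup.mk_mul]
    exact SL2.mk_sq_eq_one_of_sq_eq_neg_one (quarterTurn_mul_antidiag_sq hi)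
  · exact SL2.mk_ne_one_of_not_scalar (Or.inl (by simp))
  · exact SL2.mk_ne_one_of_not_scalar (Or.inl (by simpa using hi0))
  · rw [← QuotientGroup.mk_mul]
    refine SL2.mk_ne_one_of_not_scalar (Or.inr ?_)
    rw [coe_quarterTurn_mul_antidiag]
    simpa using fun h => mul_ne_zero h2 hi0 (by linear_combination -h)
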